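/- arXiv:2105.11214 — 5 statements merged into one kernel-verified Lean document; each statement's English description precedes it below -/
import Mathlib

section
/- For every positive integer m, the alternating binomial identity ∑_{k=0}^{2m} (-1)^k * 2^{2m-k} * C(2m,k) * C(2k,k) = C(2m,m) holds. -/
open Polynomial

lemma coeff_one_sub_X_pow (n i : ℕ) :
    ((1 - X : ℤ[X]) ^ n).coeff i = (-1) ^ i * n.choose i := by
  have h : (1 - X : ℤ[X]) ^ n = C (-1) ^ n * (X + C (-1)) ^ n := by
    rw [← mul_pow]; ring_nf; rw [map_neg, map_one]; ring
  rw [h, ← C_pow, coeff_C_mul, coeff_X_add_C_pow]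
  rcases le_or_gt i n with hle | hlt
  · obtain ⟨j, rfl⟩ : ∃ j, n = j + i := ⟨n - i, (Nat.sub_add_cancel hle).symm⟩
    rw [Nat.add_sub_cancel, pow_add]
    have hs : ((-1:ℤ)) ^ j * (-1) ^ j = 1 := by
      rw [← pow_add]; exact Even.neg_one_pow ⟨j, rfl⟩
    linear_combination ((-1:ℤ) ^ i * ((j+i).choose i)) * hs
  · simp [Nat.choose_eq_zero_of_lt hlt]

theorem binom_alt_sum (m : ℕ) (hm : 0 < m) :
    ∑ k ∈ Finset.range (2 * m + 1),
      (-1 : ℤ) ^ k * 2 ^ (2 * m - k) * Nat.choose (2 * m) k * Nat.choose (2 * k) k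
      = Nat.choose (2 * m) m := by
  have hP : (((1 : ℤ[X]) + X ^ 2) ^ (2 * m)).coeff (2 * m) = ((2 * m).choose m : ℤ) := by
    rw [add_pow, finset_sum_coeff]
    rw [Finset.sum_eq_single m]
    · simp only [one_pow, one_mul, ← pow_mul, ← C_eq_natCast, coeff_mul_C, coeff_X_pow]
      rw [if_pos (by omega), one_mul]
    · intro b _ hb
      simp only [one_pow, one_mul, ← pow_mul, ← C_eq_natCast, coeff_mul_C, coeff_X_pow]
      rw [if_neg (by omega), zero_mul]
    · intro h
      exact absurd (by simp; omega) h
  have hQ : ((2 * X + ((1 : ℤ[X]) - X) ^ 2) ^ (2 * m)).coeff (2 * m)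
      = ∑ k ∈ Finset.range (2 * m + 1),
        (-1 : ℤ) ^ (2 * m - k) * 2 ^ k * (2 * m).choose k * (2 * (2 * m - k)).choose (2 * m - k) := by
    rw [add_pow, finset_sum_coeff]
    refine Finset.sum_congr rfl fun k hk => ?_
    have hk' : k ≤ 2 * m := by simpa [Nat.lt_succ_iff] using hk
    have h1 : ((2 * X : ℤ[X]) ^ k * ((1 - X) ^ 2) ^ (2 * m - k) * ((2 * m).choose k : ℤ[X]))
        = C (2 ^ k) * (X ^ k * (1 - X) ^ (2 * (2 * m - k))) * C ((2 * m).choose k : ℤ) := by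
      simp only [mul_pow, ← pow_mul, map_pow, C_eq_natCast, map_ofNat]
      ring
    rw [h1, coeff_mul_C, coeff_C_mul, mul_comm (X ^ k) _, coeff_mul_X_pow']
    rw [if_pos hk', coeff_one_sub_X_pow]
    ring
  have hPQ : ((1 : ℤ[X]) + X ^ 2) = 2 * X + ((1 : ℤ[X]) - X) ^ 2 := by ring
  have key := hP
  rw [hPQ, hQ] at key
  rw [← key, ← Finset.sum_range_reflect]
  refine Finset.sum_congr rfl fun k hk => ?_
  have hk' : k ≤ 2 * m := by simpa [Nat.lt_succ_iff] using hk
  have e1 : 2 * m + 1 - 1 - k = 2 * m - k := by omega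
  have e2 : 2 * m - (2 * m - k) = k := by omega
  rw [e1, e2, Nat.choose_symm hk']
end

section
/- Let p be an odd prime with p ≡ 1 (mod 4). Then the quadratic Gauss sum G(1;p) = ∑_{b=0}^{p-1} e^{2πi b²/p} equals √p. -/
/-!
For every `M ≥ 1`, both `∑_{b<M} e(b²/M)` and `(1 + (-i)^M) / (1 - i) · √M` are the limit, as
`s → 0⁺`, of `√s · θ(0, τ)` with `τ = 2/M + i s/M²`; for `M ≡ 1 (mod 4)` the latter is `√M`.
Since `exp(π i n² · 2/M)` only depends on `n mod M`, splitting the theta series into residue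
classes mod `M` and applying the theta transformation to each class gives
`∑_b e(b²/M) θ(b/M, i/s)`, which tends to the Gauss sum.
Applying `τ ↦ -1/τ` first instead, `-1/τ = -M/2 + σ` with `σ → 0`; the shift by `-M/2`
multiplies the `n`-th term by `1` or `(-i)^M` according to the parity of `n`, and splitting
mod 2 and transforming once more gives the closed form.
-/

open Complex Filter Topology
open scoped Real

lemma tsum_int_eq_sum_range_tsum {E : Type*} [AddCommGroup E] [UniformSpace E]
    [IsUniformAddGroup E] [CompleteSpace E] [T0Space E] (M : ℕ) [NeZero M] {f : ℤ → E}
    (hf : Summable f) :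
    ∑' n, f n = ∑ b ∈ Finset.range M, ∑' m : ℤ, f (m * M + b) := by
  let e : Fin M × ℤ ≃ ℤ := (Equiv.prodComm _ _).trans (Int.divModEquiv M).symm
  have hfe : Summable (f ∘ e) := e.summable_iff.2 hf
  rw [← e.tsum_eq, ← Function.comp_def, hfe.tsum_prod, tsum_fintype,
    ← Fin.sum_univ_eq_sum_range (fun b => ∑' m : ℤ, f (m * M + b))]
  rfl

lemma tsum_cexp_mul_add_sq_mul_eq_jacobiTheta₂ {M τ : ℂ} (hM : M ≠ 0) (hτ : τ ≠ 0) (b : ℂ) :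
    ∑' m : ℤ, cexp (π * I * (m * M + b) ^ 2 * τ)
      = 1 / (-I * (M ^ 2 * τ)) ^ (1 / 2 : ℂ) * jacobiTheta₂ (b / M) (-1 / (M ^ 2 * τ)) := by
  have hterm (m : ℤ) : cexp (π * I * (m * M + b) ^ 2 * τ)
      = cexp (π * I * b ^ 2 * τ) * jacobiTheta₂_term m (b * M * τ) (M ^ 2 * τ) := by
    rw [jacobiTheta₂_term, ← Complex.exp_add]
    ring_nf
  have hz : b * M * τ / (M ^ 2 * τ) = b / M := by field_simp
  have hexp : cexp (π * I * b ^ 2 * τ) * cexp (-π * I * (b * M * τ) ^ 2 / (M ^ 2 * τ)) = 1 := by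
    rw [← Complex.exp_add, ← Complex.exp_zero]
    congr 1
    field_simp
    ring
  simp_rw [hterm, tsum_mul_left]
  change _ * jacobiTheta₂ _ _ = _
  rw [jacobiTheta₂_functional_equation, hz]
  linear_combination
    (1 / (-I * (M ^ 2 * τ)) ^ (1 / 2 : ℂ) * jacobiTheta₂ (b / M) (-1 / (M ^ 2 * τ))) * hexp

lemma tendsto_jacobiTheta₂_nhds_one {α : Type*} {l : Filter α} (z : ℂ) {τ : α → ℂ}
    (hτ : Tendsto (fun a => (τ a).im) l atTop) :
    Tendsto (fun a => jacobiTheta₂ z (τ a)) l (𝓝 1) := by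
  have hbound := summable_pow_mul_jacobiTheta₂_term_bound |z.im| one_pos 0
  simp only [pow_zero, one_mul] at hbound
  have key := tendsto_tsum_of_dominated_convergence (𝓕 := l)
    (f := fun a n => jacobiTheta₂_term n z (τ a))
    (g := fun n : ℤ => if n = 0 then (1 : ℂ) else 0) hbound ?_ ?_
  · rwa [tsum_ite_eq] at key
  · intro n
    split_ifs with hn
    · simp [hn, jacobiTheta₂_term, tendsto_const_nhds]
    · rw [tendsto_zero_iff_norm_tendsto_zero]
      simp only [norm_jacobiTheta₂_term]
      refine Real.tendsto_exp_atBot.comp (tendsto_atBot_add_const_right _ _ ?_)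
      have hn2 : 0 < π * n ^ 2 := by positivity
      exact tendsto_neg_atTop_atBot.comp (hτ.const_mul_atTop hn2) |>.congr fun a => by simp
  · filter_upwards [hτ.eventually_ge_atTop 1] with a ha n
    simpa using norm_jacobiTheta₂_term_le one_pos le_rfl ha n

lemma jacobiTheta₂_zero_add_eq_sum_range (M : ℕ) [NeZero M] (x : ℝ) {τ : ℂ} (hτ : 0 < τ.im)
    (hx : ∀ m n : ℤ, cexp (π * I * (m * M + n) ^ 2 * x) = cexp (π * I * n ^ 2 * x)) :
    jacobiTheta₂ 0 (x + τ) = 1 / (-I * (M ^ 2 * τ)) ^ (1 / 2 : ℂ) *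
      ∑ b ∈ Finset.range M, cexp (π * I * b ^ 2 * x) * jacobiTheta₂ (b / M) (-1 / (M ^ 2 * τ)) := by
  have hτ0 : τ ≠ 0 := by
    rintro rfl
    simp at hτ
  have hM : (M : ℂ) ≠ 0 := NeZero.ne _
  have hterm (n : ℤ) : jacobiTheta₂_term n 0 (x + τ) = cexp (π * I * n ^ 2 * (x + τ)) := by
    rw [jacobiTheta₂_term]
    ring_nf
  have hsum : Summable fun n : ℤ => cexp (π * I * n ^ 2 * (x + τ)) := by
    simpa only [hterm] using (summable_jacobiTheta₂_term_iff 0 (x + τ)).2 (by simpa using hτ)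
  rw [jacobiTheta₂, tsum_congr hterm, tsum_int_eq_sum_range_tsum M hsum, Finset.mul_sum]
  refine Finset.sum_congr rfl fun b _ => ?_
  have hcoset (m : ℤ) : cexp (π * I * ((m * M + b : ℤ) : ℂ) ^ 2 * (x + τ))
      = cexp (π * I * b ^ 2 * x) * cexp (π * I * (m * M + b) ^ 2 * τ) := by
    have hxb := hx m b
    push_cast at hxb ⊢
    rw [← hxb, ← Complex.exp_add]
    ring_nf
  rw [tsum_congr hcoset, tsum_mul_left, tsum_cexp_mul_add_sq_mul_eq_jacobiTheta₂ hM hτ0]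
  ring

namespace Complex

lemma ofReal_mul_cpow {r : ℝ} (hr : 0 < r) {w : ℂ} (hw : w ≠ 0) (c : ℂ) :
    (r * w) ^ c = r ^ c * w ^ c := by
  have hr' : (r : ℂ) ≠ 0 := ofReal_ne_zero.mpr hr.ne'
  rw [cpow_def_of_ne_zero (mul_ne_zero hr' hw), log_ofReal_mul hr hw, add_mul, exp_add,
    cpow_def_of_ne_zero hr', cpow_def_of_ne_zero hw, ofReal_log hr.le]

lemma ofReal_cpow_one_half {r : ℝ} (hr : 0 ≤ r) : (r : ℂ) ^ (1 / 2 : ℂ) = √r := by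
  rw [Real.sqrt_eq_rpow, ofReal_cpow hr]
  norm_num

end Complex

lemma im_ofReal_div_natCast_sq_mul_I (M : ℕ) (s : ℝ) : ((s : ℂ) / M ^ 2 * I).im = s / M ^ 2 := by
  rw [mul_I_im, ← ofReal_natCast, ← ofReal_pow, ← ofReal_div, ofReal_re]

lemma sqrt_mul_jacobiTheta₂_eq_sum_range (M : ℕ) [NeZero M] {s : ℝ} (hs : 0 < s) :
    (√s : ℂ) * jacobiTheta₂ 0 (2 / M + s / M ^ 2 * I)
      = ∑ b ∈ Finset.range M, cexp (2 * π * I * b ^ 2 / M) * jacobiTheta₂ (b / M) (I / s) := by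
  have hM : (M : ℂ) ≠ 0 := NeZero.ne _
  have hs' : (s : ℂ) ≠ 0 := ofReal_ne_zero.2 hs.ne'
  have hsqrt : (√s : ℂ) ≠ 0 := ofReal_ne_zero.2 (Real.sqrt_pos.2 hs).ne'
  have hperiodic (m n : ℤ) : cexp (π * I * (m * M + n) ^ 2 * (2 / M : ℝ))
      = cexp (π * I * n ^ 2 * (2 / M : ℝ)) :=
    exp_eq_exp_iff_exists_int.2 ⟨m * (m * M + 2 * n), by push_cast; field_simp; ring⟩
  have key := jacobiTheta₂_zero_add_eq_sum_range M (2 / M) (τ := s / M ^ 2 * I)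
    (by rw [im_ofReal_div_natCast_sq_mul_I]
        exact div_pos hs (pow_pos (Nat.cast_pos.2 (NeZero.pos M)) 2)) hperiodic
  have hfactor : -I * (M ^ 2 * (s / M ^ 2 * I)) = s := by
    field_simp
    rw [I_sq]
    ring
  have harg : -1 / (M ^ 2 * (s / M ^ 2 * I)) = I / s := by
    field_simp
    rw [I_sq]
  push_cast at key
  rw [key, hfactor, harg, ofReal_cpow_one_half hs.le, ← mul_assoc, mul_one_div_cancel hsqrt,
    one_mul]
  refine Finset.sum_congr rfl fun b _ => ?_
  ring_nf

lemma cexp_pi_mul_I_mul_neg_natCast_div_two (M : ℕ) : cexp (π * I * (-M / 2 : ℝ)) = (-I) ^ M := by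
  rw [← exp_neg_pi_div_two_mul_I, ← exp_nat_mul]
  push_cast
  ring_nf

lemma sqrt_mul_jacobiTheta₂_eq_div (M : ℕ) [NeZero M] {s : ℝ} (hs : 0 < s) :
    (√s : ℂ) * jacobiTheta₂ 0 (2 / M + s / M ^ 2 * I)
      = (jacobiTheta₂ 0 (-1 / (2 * M) + I / s)
          + (-I) ^ M * jacobiTheta₂ (1 / 2) (-1 / (2 * M) + I / s))
        / ((-I * (2 / M + s / M ^ 2 * I)) ^ (1 / 2 : ℂ)
          * (2 / (M * (2 / M + s / M ^ 2 * I))) ^ (1 / 2 : ℂ)) := by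
  set τ : ℂ := 2 / M + s / M ^ 2 * I with hτ_def
  have hM : (M : ℂ) ≠ 0 := NeZero.ne _
  have hs' : (s : ℂ) ≠ 0 := ofReal_ne_zero.2 hs.ne'
  have hτ : 0 < τ.im := by
    rw [hτ_def, add_im, im_ofReal_div_natCast_sq_mul_I]
    simpa using div_pos hs (pow_pos (Nat.cast_pos.2 (NeZero.pos M)) 2)
  have hτ0 : τ ≠ 0 := by
    intro h
    simp [h] at hτ
  set σ : ℂ := s * I / (2 * M * τ) with hσ_def
  have hσ : -1 / τ = (-M / 2 : ℝ) + σ := by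
    rw [hσ_def]
    push_cast
    field_simp
    rw [hτ_def]
    field_simp
    ring
  have hσim : 0 < σ.im := by
    have : σ.im = (-1 / τ).im := by simp [hσ]
    rw [this, neg_div, neg_im, one_div, inv_im, neg_div, neg_neg]
    exact div_pos hτ (normSq_pos.2 hτ0)
  have hperiodic (m n : ℤ) : cexp (π * I * (m * (2 : ℕ) + n) ^ 2 * (-M / 2 : ℝ))
      = cexp (π * I * n ^ 2 * (-M / 2 : ℝ)) :=
    exp_eq_exp_iff_exists_int.2 ⟨-(M * m * (m + n)), by push_cast; ring⟩
  have key := jacobiTheta₂_zero_add_eq_sum_range 2 (-M / 2) hσim hperiodic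
  simp only [← hσ, Finset.sum_range_succ, Finset.sum_range_zero, Nat.cast_zero, Nat.cast_one,
    Nat.cast_ofNat, zero_div, ne_eq, OfNat.ofNat_ne_zero, not_false_eq_true, zero_pow, mul_zero,
    zero_mul, exp_zero, one_mul, one_pow, mul_one, zero_add, cexp_pi_mul_I_mul_neg_natCast_div_two] at key
  have harg : -1 / (2 ^ 2 * σ) = -1 / (2 * M) + I / s := by
    rw [hσ_def, hτ_def]
    field_simp
    ring_nf
    rw [I_sq]
    ring
  have hfactor : -I * (2 ^ 2 * σ) = s * (2 / (M * τ)) := by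
    rw [hσ_def]
    field_simp
    ring_nf
    rw [I_sq]
    ring
  have hS : jacobiTheta₂ 0 τ = 1 / (-I * τ) ^ (1 / 2 : ℂ) * jacobiTheta₂ 0 (-1 / τ) := by
    simpa using jacobiTheta₂_functional_equation 0 τ
  have hA : 2 / (M * τ) ≠ 0 := div_ne_zero two_ne_zero (mul_ne_zero hM hτ0)
  have hsqrt : (√s : ℂ) ≠ 0 := ofReal_ne_zero.2 (Real.sqrt_pos.2 hs).ne'
  rw [hS, key, harg, hfactor, ofReal_mul_cpow hs hA, ofReal_cpow_one_half hs.le]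
  field_simp

lemma cpow_one_half_neg_I_mul_two_div (M : ℕ) [NeZero M] :
    (-I * (2 / M)) ^ (1 / 2 : ℂ) = (1 - I) / √M := by
  have hM : (0 : ℝ) < M := Nat.cast_pos.2 (NeZero.pos M)
  have hsq : ((1 - I) / √M) ^ 2 = -I * (2 / M) := by
    rw [div_pow, ← ofReal_pow, Real.sq_sqrt hM.le]
    field_simp
    ring_nf
    rw [I_sq]
    push_cast
    ring
  have hre : 0 < ((1 - I) / √M).re := by
    rw [div_ofReal_re]
    exact div_pos (by simp) (Real.sqrt_pos.2 hM)
  rw [← hsq, one_div, sq_cpow_two_inv hre]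

theorem sum_range_cexp_sq_div_eq (M : ℕ) [NeZero M] :
    ∑ b ∈ Finset.range M, cexp (2 * π * I * b ^ 2 / M) = (1 + (-I) ^ M) / (1 - I) * √M := by
  have hM : (M : ℂ) ≠ 0 := NeZero.ne _
  set τ : ℝ → ℂ := fun s => 2 / M + s / M ^ 2 * I
  have hτ : Tendsto τ (𝓝[>] 0) (𝓝 (2 / M)) := by
    have : Continuous τ := by fun_prop
    simpa [τ] using (this.tendsto 0).mono_left nhdsWithin_le_nhds
  have him (a : ℂ) : Tendsto (fun s : ℝ => (a + I / s).im) (𝓝[>] 0) atTop := by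
    simpa using tendsto_atTop_add_const_left _ a.im tendsto_inv_nhdsGT_zero
  have h1 : (2 : ℂ) / (M * (2 / M)) = 1 := by field_simp
  have hgauss : Tendsto (fun s : ℝ => (√s : ℂ) * jacobiTheta₂ 0 (τ s)) (𝓝[>] 0)
      (𝓝 (∑ b ∈ Finset.range M, cexp (2 * π * I * b ^ 2 / M) * 1)) := by
    refine Tendsto.congr' (eventually_nhdsWithin_of_forall fun s hs =>
      (sqrt_mul_jacobiTheta₂_eq_sum_range M hs).symm) ?_
    refine tendsto_finsetSum _ fun b _ => (tendsto_jacobiTheta₂_nhds_one _ ?_).const_mul _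
    simpa using him 0
  have hmodular : Tendsto (fun s : ℝ => (√s : ℂ) * jacobiTheta₂ 0 (τ s)) (𝓝[>] 0)
      (𝓝 ((1 + (-I) ^ M * 1)
        / ((-I * (2 / M)) ^ (1 / 2 : ℂ) * (2 / (M * (2 / M))) ^ (1 / 2 : ℂ)))) := by
    refine Tendsto.congr' (eventually_nhdsWithin_of_forall fun s hs =>
      (sqrt_mul_jacobiTheta₂_eq_div M hs).symm) ?_
    refine Tendsto.div ?_ ?_ ?_
    · exact (tendsto_jacobiTheta₂_nhds_one _ (him _)).add
        ((tendsto_jacobiTheta₂_nhds_one _ (him _)).const_mul _)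
    · refine ((continuousAt_cpow_const_of_re_pos ?_ ?_).tendsto.comp (hτ.const_mul _)).mul
        ((continuousAt_cpow_const_of_re_pos ?_ ?_).tendsto.comp
          (tendsto_const_nhds.div (hτ.const_mul _) ?_))
      all_goals simp [h1, hM]
    · simp [h1, hM, cpow_eq_zero_iff]
  have := tendsto_nhds_unique hgauss hmodular
  rw [h1, one_cpow, cpow_one_half_neg_I_mul_two_div] at this
  simp only [mul_one] at this
  rw [this]
  field_simp

theorem gauss_sum_one_mod_four_general (p : ℕ) (h4 : p % 4 = 1) :
    ∑ b ∈ Finset.range p, Complex.exp (2 * Real.pi * I * (b : ℂ) ^ 2 / p)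
      = (Real.sqrt p : ℂ) := by
  have : NeZero p := ⟨by omega⟩
  have hI : (-I) ^ p = -I := by
    rw [← Nat.div_add_mod p 4, h4, pow_succ, pow_mul]
    norm_num
  have hI' : (1 : ℂ) - I ≠ 0 := by simp [Complex.ext_iff]
  rw [sum_range_cexp_sq_div_eq, hI, ← sub_eq_add_neg, div_self hI', one_mul]

theorem gauss_sum_one_mod_four (p : ℕ) (hp : p.Prime) (hp2 : p ≠ 2) (h4 : p % 4 = 1) :
    ∑ b ∈ Finset.range p, Complex.exp (2 * Real.pi * I * (b : ℂ) ^ 2 / p)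
      = (Real.sqrt p : ℂ) :=
  gauss_sum_one_mod_four_general p h4
end

section
/- Let q be a positive integer with q ≡ 0 (mod 4). Then the quadratic Gauss sum G(1;q) = ∑_{b=0}^{q-1} e^{2πi b²/q} equals (1+i)√q. -/
/-!
With `θ(τ) = ∑ₙ exp(πin²τ)` and `τₜ = 2/q + it`, compute `lim_{t → 0⁺} √t · θ(τₜ)` in two ways.

Sorting `n` by its residue `b` mod `q` gives `θ(τₜ) = ∑_b e(b²/q) · evenKernel(b/q, q²t)`, and the
functional equation of the kernel gives `√t · evenKernel(b/q, q²t) → 1/q`; so the limit is `G(1;q)/q`.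

If `q = 4m`, then `τ ↦ -1/τ`, `τ ↦ τ + 2m`, `τ ↦ -1/τ` carry `τₜ` to `-2/q + 4i/(q²t)`, which tends
to `i∞`, where `θ → 1`. The two automorphy factors `(-iτ)^{1/2}` absorb the `√t` and have explicit
limits, and the limit comes out as `(1+i)√q/q`.
-/

open Complex Filter Topology HurwitzZeta
open scoped Real

namespace QuadraticGaussSum

lemma cpow_one_half_eq_of_sq_eq {w z : ℂ} (hw : 0 < w.re) (h : w ^ 2 = z) :
    z ^ (1 / 2 : ℂ) = w := by
  rw [← h, one_div, sq_cpow_two_inv hw]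

lemma ofReal_mul_cpow {r : ℝ} (hr : 0 < r) {z : ℂ} (hz : z ≠ 0) (s : ℂ) :
    ((r : ℂ) * z) ^ s = (r : ℂ) ^ s * z ^ s := by
  have hr' : (r : ℂ) ≠ 0 := ofReal_ne_zero.mpr hr.ne'
  rw [cpow_def_of_ne_zero (mul_ne_zero hr' hz), cpow_def_of_ne_zero hr', cpow_def_of_ne_zero hz,
    log_ofReal_mul hr hz, ← Complex.exp_add, add_mul, ofReal_log hr.le]

lemma ofReal_mul_cpow_one_half {t : ℝ} (ht : 0 < t) {z : ℂ} (hz : z ≠ 0) :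
    ((t : ℂ) * z) ^ (1 / 2 : ℂ) = √t * z ^ (1 / 2 : ℂ) := by
  rw [ofReal_mul_cpow ht hz, Real.sqrt_eq_rpow, ofReal_cpow ht.le]
  norm_num

lemma tendsto_cosKernel_atTop (a : UnitAddCircle) : Tendsto (cosKernel a) atTop (𝓝 1) := by
  obtain ⟨p, hp, hO⟩ := isBigO_atTop_cosKernel_sub a
  have hexp : Tendsto (fun x : ℝ => Real.exp (-p * x)) atTop (𝓝 0) :=
    Real.tendsto_exp_atBot.comp (tendsto_id.const_mul_atTop_of_neg (neg_lt_zero.mpr hp))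
  simpa using (hO.trans_tendsto hexp).add_const 1

lemma tendsto_sqrt_mul_evenKernel (a : UnitAddCircle) {c : ℝ} (hc : 0 < c) :
    Tendsto (fun t : ℝ => √t * evenKernel a (c ^ 2 * t)) (𝓝[>] 0) (𝓝 c⁻¹) := by
  have hinv : Tendsto (fun t : ℝ => 1 / (c ^ 2 * t)) (𝓝[>] 0) atTop := by
    simpa only [one_div, mul_inv] using tendsto_inv_nhdsGT_zero.const_mul_atTop (by positivity)
  have hlim := ((tendsto_cosKernel_atTop a).comp hinv).const_mul c⁻¹
  rw [mul_one] at hlim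
  refine hlim.congr' ?_
  filter_upwards [self_mem_nhdsWithin] with t (ht : 0 < t)
  rw [evenKernel_functional_equation, ← Real.sqrt_eq_rpow, Real.sqrt_mul (by positivity),
    Real.sqrt_sq hc.le, Function.comp_apply]
  field_simp

lemma tendsto_jacobiTheta_comap_im_atTop : Tendsto jacobiTheta (comap im atTop) (𝓝 1) := by
  have hexp : Tendsto (fun τ : ℂ => Real.exp (-π * τ.im)) (comap im atTop) (𝓝 0) :=
    Real.tendsto_exp_atBot.comp
      ((tendsto_id.const_mul_atTop_of_neg (neg_lt_zero.mpr Real.pi_pos)).comp tendsto_comap)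
  simpa using (isBigO_at_im_infty_jacobiTheta_sub_one.trans_tendsto hexp).add_const 1

lemma hasSum_jacobiTheta {τ : ℂ} (hτ : 0 < τ.im) :
    HasSum (fun n : ℤ => cexp (π * I * n ^ 2 * τ)) (jacobiTheta τ) := by
  simpa [jacobiTheta₂_term, jacobiTheta_eq_jacobiTheta₂] using
    hasSum_jacobiTheta₂_term 0 hτ

lemma jacobiTheta_eq_div_cpow (τ : ℂ) :
    jacobiTheta τ = jacobiTheta (-1 / τ) / (-I * τ) ^ (1 / 2 : ℂ) := by
  simpa [jacobiTheta_eq_jacobiTheta₂, div_eq_inv_mul] using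
    jacobiTheta₂_functional_equation 0 τ

lemma jacobiTheta_periodic : Function.Periodic jacobiTheta 2 := fun τ => by
  rw [add_comm, jacobiTheta_two_add]

lemma jacobiTheta_eq_div_cpow_two_mul_nat_sub_inv (τ : ℂ) (m : ℕ) :
    jacobiTheta τ = jacobiTheta (-1 / (2 * m - 1 / τ)) /
      ((-I * τ) ^ (1 / 2 : ℂ) * (-I * (2 * m - 1 / τ)) ^ (1 / 2 : ℂ)) := by
  calc jacobiTheta τ
    _ = jacobiTheta (-1 / τ) / (-I * τ) ^ (1 / 2 : ℂ) := jacobiTheta_eq_div_cpow τ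
    _ = jacobiTheta (2 * m - 1 / τ) / (-I * τ) ^ (1 / 2 : ℂ) := by
      rw [← jacobiTheta_periodic.nat_mul m (-1 / τ)]
      ring_nf
    _ = _ := by
      rw [jacobiTheta_eq_div_cpow (2 * m - 1 / τ), div_div,
        mul_comm ((-I * (2 * (m : ℂ) - 1 / τ)) ^ _)]

lemma cexp_mul_sq_two_div_add_I_mul {q : ℕ} (hq : q ≠ 0) (t : ℝ) (b : ℕ) (k : ℤ) :
    cexp (π * I * ((k * q + b : ℤ) : ℂ) ^ 2 * (2 / q + I * t)) =
      cexp (2 * π * I * b ^ 2 / q) * rexp (-π * (k + b / q) ^ 2 * (q ^ 2 * t)) := by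
  have hq' : (q : ℂ) ≠ 0 := Nat.cast_ne_zero.mpr hq
  rw [ofReal_exp, ← Complex.exp_add, Complex.exp_eq_exp_iff_exists_int]
  refine ⟨q * k ^ 2 + 2 * k * b, ?_⟩
  push_cast
  field_simp
  linear_combination ((t : ℂ) * q * (b + q * k) ^ 2) * I_sq

lemma jacobiTheta_two_div_add_I_mul {q : ℕ} (hq : q ≠ 0) {t : ℝ} (ht : 0 < t) :
    jacobiTheta (2 / q + I * t) =
      ∑ b ∈ Finset.range q,
        cexp (2 * π * I * b ^ 2 / q) * evenKernel (b / q : ℝ) (q ^ 2 * t) := by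
  have : NeZero q := ⟨hq⟩
  have hτ : 0 < (2 / q + I * t : ℂ).im := by simpa using ht
  let e : Fin q × ℤ ≃ ℤ := (Equiv.prodComm _ _).trans (Int.divModEquiv q).symm
  have hfiber (b : Fin q) :
      HasSum (fun k : ℤ => cexp (π * I * (e (b, k) : ℂ) ^ 2 * (2 / q + I * t)))
        (cexp (2 * π * I * (b : ℕ) ^ 2 / q) * evenKernel ((b : ℕ) / q : ℝ) (q ^ 2 * t)) := by
    simp only [e, Equiv.trans_apply, Equiv.prodComm_apply, Prod.swap_prod_mk,
      Int.divModEquiv_symm_apply, cexp_mul_sq_two_div_add_I_mul hq]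
    exact (hasSum_ofReal.mpr (hasSum_int_evenKernel _ (by positivity))).mul_left _
  rw [← Fin.sum_univ_eq_sum_range (fun b => cexp (2 * π * I * b ^ 2 / q) *
    evenKernel (b / q : ℝ) (q ^ 2 * t))]
  exact ((e.hasSum_iff.mpr (hasSum_jacobiTheta hτ)).prod_fiberwise hfiber).unique
    (hasSum_fintype _)

lemma tendsto_sqrt_mul_jacobiTheta_two_div_add_I_mul {q : ℕ} (hq : q ≠ 0) :
    Tendsto (fun t : ℝ => √t * jacobiTheta (2 / q + I * t)) (𝓝[>] 0)
      (𝓝 ((∑ b ∈ Finset.range q, cexp (2 * π * I * b ^ 2 / q)) / q)) := by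
  have hq' : (0 : ℝ) < q := by positivity
  have hterm (b : ℕ) : Tendsto (fun t : ℝ => cexp (2 * π * I * b ^ 2 / q) *
      ↑(√t * evenKernel (b / q : ℝ) (q ^ 2 * t))) (𝓝[>] 0)
      (𝓝 (cexp (2 * π * I * b ^ 2 / q) * ↑(q : ℝ)⁻¹)) :=
    ((continuous_ofReal.tendsto _).comp (tendsto_sqrt_mul_evenKernel _ hq')).const_mul _
  rw [Finset.sum_div]
  simp only [ofReal_inv, ofReal_natCast, ← div_eq_mul_inv] at hterm
  refine (tendsto_finsetSum _ fun b _ => hterm b).congr' ?_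
  filter_upwards [self_mem_nhdsWithin] with t (ht : 0 < t)
  rw [jacobiTheta_two_div_add_I_mul hq ht, Finset.mul_sum]
  refine Finset.sum_congr rfl fun b _ => ?_
  push_cast
  ring

lemma sqrt_mul_jacobiTheta_two_div_add_I_mul {q : ℕ} (hq : q ≠ 0) (h4 : 4 ∣ q) {t : ℝ}
    (ht : 0 < t) :
    √t * jacobiTheta (2 / q + I * t) = jacobiTheta (-2 / q + I * (4 / (q ^ 2 * t) : ℝ)) /
      ((-I * (2 / q + I * t)) ^ (1 / 2 : ℂ) * (q / (2 * (2 / q + I * t))) ^ (1 / 2 : ℂ)) := by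
  obtain ⟨m, hm⟩ := h4
  have hqm : (q : ℂ) = 4 * m := by rw [hm]; push_cast; ring
  have hq' : (q : ℂ) ≠ 0 := Nat.cast_ne_zero.mpr hq
  have ht' : (t : ℂ) ≠ 0 := ofReal_ne_zero.mpr ht.ne'
  set τ : ℂ := 2 / q + I * t with hτ
  clear_value τ
  have hτ0 : τ ≠ 0 := fun h => ht.ne (by simpa [h] using congrArg im hτ)
  -- `q = 4m` is what makes `2m - 1/τ` vanish as `t → 0`.
  have hw : 2 * m - 1 / τ = I * q * t / (2 * τ) := by
    field_simp
    rw [hτ]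
    field_simp
    linear_combination (-(2 + q * I * t)) * hqm
  have hinv : -1 / (2 * m - 1 / τ) = -2 / q + I * (4 / (q ^ 2 * t) : ℝ) := by
    rw [hw, hτ]
    push_cast
    field_simp
    linear_combination -4 * I_sq
  have hscale : -I * (2 * m - 1 / τ) = t * (q / (2 * τ)) := by
    rw [hw]
    field_simp
    linear_combination -I_sq
  have hsqrt : (√t : ℂ) ≠ 0 := ofReal_ne_zero.mpr (Real.sqrt_ne_zero'.mpr ht)
  rw [jacobiTheta_eq_div_cpow_two_mul_nat_sub_inv τ m, hinv, hscale,
    ofReal_mul_cpow_one_half ht (by simp [hτ0, hq'])]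
  field_simp

lemma tendsto_cpow_mul_cpow_two_div_add_I_mul {q : ℕ} (hq : q ≠ 0) :
    Tendsto (fun t : ℝ =>
        (-I * (2 / q + I * t)) ^ (1 / 2 : ℂ) * (q / (2 * (2 / q + I * t))) ^ (1 / 2 : ℂ))
      (𝓝[>] 0) (𝓝 ((1 - I) / √q * (q / 2))) := by
  have hq' : (q : ℂ) ≠ 0 := Nat.cast_ne_zero.mpr hq
  have hqpos : (0 : ℝ) < q := by positivity
  have hpath : Tendsto (fun t : ℝ => (2 / q + I * t : ℂ)) (𝓝[>] 0) (𝓝 (2 / q)) := by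
    have : Continuous (fun t : ℝ => (2 / q + I * t : ℂ)) := by fun_prop
    simpa using (this.tendsto 0).mono_left nhdsWithin_le_nhds
  have hroot₁ : (-I * (2 / q)) ^ (1 / 2 : ℂ) = (1 - I) / √q := by
    refine cpow_one_half_eq_of_sq_eq ?_ ?_
    · simp [div_re, Real.sqrt_pos.mpr hqpos, Nat.pos_of_ne_zero hq]
    · have hsq : ((√q : ℝ) : ℂ) ^ 2 = q := by norm_cast; exact Real.sq_sqrt hqpos.le
      have hsq0 : ((√q : ℝ) : ℂ) ≠ 0 := by simp [hq]
      field_simp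
      rw [hsq]
      linear_combination (q : ℂ) * I_sq
  have hroot₂ : ((q : ℂ) / (2 * (2 / q))) ^ (1 / 2 : ℂ) = q / 2 := by
    refine cpow_one_half_eq_of_sq_eq (by simp [Nat.pos_of_ne_zero hq]) ?_
    field_simp
  rw [← hroot₁, ← hroot₂]
  refine ((hpath.const_mul (-I)).cpow tendsto_const_nhds ?_).mul
    ((tendsto_const_nhds.div (hpath.const_mul 2) (by simp [hq])).cpow tendsto_const_nhds ?_)
  · simp [mem_slitPlane_iff, hq]
  · have hreal : (q : ℂ) / (2 * (2 / q)) = ((q ^ 2 / 4 : ℝ) : ℂ) := by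
      push_cast
      field_simp
      norm_num
    exact hreal ▸ ofReal_mem_slitPlane.mpr (by positivity)

lemma tendsto_neg_two_div_add_I_mul_comap_im_atTop {q : ℕ} (hq : q ≠ 0) :
    Tendsto (fun t : ℝ => -2 / q + I * (4 / (q ^ 2 * t) : ℝ)) (𝓝[>] 0) (comap im atTop) := by
  have him (t : ℝ) : (-2 / q + I * (4 / (q ^ 2 * t) : ℝ) : ℂ).im = 4 / q ^ 2 * t⁻¹ := by
    rw [add_im, mul_im, I_re, I_im, ofReal_re, ofReal_im, div_natCast_im]
    simp
    ring
  simpa only [tendsto_comap_iff, Function.comp_def, him] using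
    tendsto_inv_nhdsGT_zero.const_mul_atTop (by positivity : (0 : ℝ) < 4 / q ^ 2)

lemma tendsto_sqrt_mul_jacobiTheta_two_div_add_I_mul_of_four_dvd {q : ℕ} (hq : q ≠ 0)
    (h4 : 4 ∣ q) :
    Tendsto (fun t : ℝ => √t * jacobiTheta (2 / q + I * t)) (𝓝[>] 0)
      (𝓝 ((1 + I) * √q / q)) := by
  have hsq0 : ((√q : ℝ) : ℂ) ≠ 0 := by simp [hq]
  have h1I : (1 - I : ℂ) ≠ 0 := by simp [sub_eq_zero, Complex.ext_iff]
  have hvalue : 1 / ((1 - I) / √q * (q / 2)) = (1 + I) * √q / q := by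
    field_simp
    linear_combination I_sq
  rw [← hvalue]
  refine ((tendsto_jacobiTheta_comap_im_atTop.comp
    (tendsto_neg_two_div_add_I_mul_comap_im_atTop hq)).div
    (tendsto_cpow_mul_cpow_two_div_add_I_mul hq) (by simp [hq, hsq0, h1I])).congr' ?_
  filter_upwards [self_mem_nhdsWithin] with t (ht : 0 < t)
  exact (sqrt_mul_jacobiTheta_two_div_add_I_mul hq h4 ht).symm

end QuadraticGaussSum

open QuadraticGaussSum in
theorem gauss_sum_zero_mod_four (q : ℕ) (hq : 0 < q) (h4 : q % 4 = 0) :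
    ∑ b ∈ Finset.range q, Complex.exp (2 * Real.pi * I * (b : ℂ) ^ 2 / q)
      = (1 + I) * (Real.sqrt q : ℂ) :=
  (div_left_inj' (Nat.cast_ne_zero.mpr hq.ne')).mp <|
    tendsto_nhds_unique (tendsto_sqrt_mul_jacobiTheta_two_div_add_I_mul hq.ne')
      (tendsto_sqrt_mul_jacobiTheta_two_div_add_I_mul_of_four_dvd hq.ne'
        (Nat.dvd_of_mod_eq_zero h4))
end

section
/- Let p be an odd prime, n an integer with gcd(n,p)=1, and χ a non-principal Dirichlet character modulo p. Then |G(n,χ;p)|² = (1 + χ(-1))·p + (n/p)·G(1;p) · ∑_{a=2}^{p-2} χ(a) · ((a²-1)/p), where (·/p) is the Legendre symbol, G(n,χ;p) = ∑_{a=1}^{p-1} χ(a) e^{2πi n a²/p}, and G(1;p) = ∑_{b=0}^{p-1} e^{2πi b²/p}. -/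
/-!
Write `ψ(x) = e(x/p)` and `G = ∑ₐ χ(a) ψ(n a²)`, so that `|G|² = G · Ḡ` with
`Ḡ = ∑_b χ⁻¹(b) ψ(-n b²)`. For `b ≠ 0` substitute `a = b c`: the row of `b` becomes
`∑_c χ(c) ψ(n (c² - 1) b²)`, and the row `b = 0`, which vanishes, has the same shape because
`∑_c χ(c) = 0`. Swapping the sums leaves quadratic exponential sums `∑_b ψ(k b²)`; counting square
roots, `#{x | x² = t} = 1 + (t/p)`, evaluates them as `(k/p) G(1;p)`, plus `p` when `k = 0`,
i.e. when `c = ±1`.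
-/

open Complex Finset

section QuadraticSums

variable {F : Type*} [Field F] [Fintype F] {R : Type*} [CommRing R]

theorem mulChar_inv_mul_addChar_neg_mul_sum_sq [IsDomain R] {χ : MulChar F R} (hχ : χ ≠ 1)
    (ψ : AddChar F R) (k b : F) :
    χ⁻¹ b * ψ (-(k * b ^ 2)) * ∑ a, χ a * ψ (k * a ^ 2) =
      ∑ c, χ c * ψ (k * (c ^ 2 - 1) * b ^ 2) := by
  rcases eq_or_ne b 0 with rfl | hb
  · simp [MulChar.sum_eq_zero_of_ne_one hχ, MulChar.map_zero]
  rw [mul_sum]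
  refine (Fintype.sum_equiv (Equiv.mulLeft₀ b hb) _ _ fun c ↦ ?_).symm
  calc χ c * ψ (k * (c ^ 2 - 1) * b ^ 2)
      = χ (b⁻¹ * (b * c)) * ψ (-(k * b ^ 2) + k * (b * c) ^ 2) := by
        rw [inv_mul_cancel_left₀ hb]
        congr 2
        ring
    _ = _ := by
        rw [map_mul, AddChar.map_add_eq_mul, ← MulChar.inv_apply', Equiv.mulLeft₀_apply]
        ring

variable [DecidableEq F]

local notation "φ" => MulChar.ringHomComp (quadraticChar F) (algebraMap ℤ R)

theorem sum_addChar_mul_sq_eq_sum_quadraticChar (hF : ringChar F ≠ 2) (ψ : AddChar F R)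
    (k : F) : ∑ x, ψ (k * x ^ 2) = ∑ t, (φ t + 1) * ψ (k * t) := by
  rw [← sum_fiberwise' univ (· ^ 2) fun t ↦ ψ (k * t)]
  refine sum_congr rfl fun t _ ↦ ?_
  rw [sum_const, nsmul_eq_mul]
  congr 1
  have hcard := quadraticChar_card_sqrts hF t
  rw [Set.toFinset_ofPred] at hcard
  rw [MulChar.ringHomComp_apply, eq_intCast, ← Int.cast_one, ← Int.cast_add, ← hcard,
    Int.cast_natCast]

theorem sum_quadraticChar_mul_addChar_mul [IsDomain R] (hF : ringChar F ≠ 2)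
    (ψ : AddChar F R) (k : F) : ∑ t, φ t * ψ (k * t) = φ k * gaussSum φ ψ := by
  by_cases hk : k = 0
  · have hsum := congrArg (Int.cast : ℤ → R) (quadraticChar_sum_zero hF)
    push_cast at hsum
    simpa [hk, MulChar.ringHomComp_apply] using hsum
  · have := gaussSum_mulShift_eq φ ψ (Units.mk0 k hk)
    rw [((quadraticChar_isQuadratic F).comp _).inv] at this
    simpa [gaussSum, AddChar.mulShift_apply] using this

theorem sum_addChar_mul_sq [IsDomain R] (hF : ringChar F ≠ 2) {ψ : AddChar F R}
    (hψ : ψ.IsPrimitive) (k : F) :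
    ∑ x, ψ (k * x ^ 2) = φ k * gaussSum φ ψ + if k = 0 then (Fintype.card F : R) else 0 := by
  simp_rw [sum_addChar_mul_sq_eq_sum_quadraticChar hF, add_mul, one_mul, sum_add_distrib,
    sum_quadraticChar_mul_addChar_mul hF, mul_comm k, AddChar.sum_mulShift k hψ, Nat.cast_ite,
    Nat.cast_zero]

theorem gaussSum_quadraticChar_eq_sum_sq [IsDomain R] (hF : ringChar F ≠ 2) {ψ : AddChar F R}
    (hψ : ψ.IsPrimitive) : gaussSum φ ψ = ∑ x, ψ (x ^ 2) := by
  simpa using (sum_addChar_mul_sq hF hψ 1).symm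

theorem sum_ite_sq_eq_one (hF : ringChar F ≠ 2) (f : F → R) :
    ∑ c, (if c ^ 2 = 1 then f c else 0) = f 1 + f (-1) := by
  have hroots : ({c | c ^ 2 = 1} : Finset F) = {1, -1} := by
    ext c
    simp [pow_two, mul_self_eq_one_iff]
  rw [← sum_filter, hroots, sum_pair (Ring.neg_one_ne_one_of_char_ne_two hF).symm]

theorem sum_mulChar_mul_addChar_sq_mul_sum_inv [IsDomain R] (hF : ringChar F ≠ 2)
    {χ : MulChar F R} (hχ : χ ≠ 1) {ψ : AddChar F R} (hψ : ψ.IsPrimitive) {k : F} (hk : k ≠ 0) :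
    (∑ a, χ a * ψ (k * a ^ 2)) * ∑ b, χ⁻¹ b * ψ (-(k * b ^ 2)) =
      (1 + χ (-1)) * Fintype.card F + φ k * gaussSum φ ψ * ∑ c, χ c * φ (c ^ 2 - 1) := by
  have hvanish (c : F) : k * (c ^ 2 - 1) = 0 ↔ c ^ 2 = 1 := by simp [hk, sub_eq_zero]
  calc _ = ∑ b, ∑ c, χ c * ψ (k * (c ^ 2 - 1) * b ^ 2) := by
        rw [mul_comm, sum_mul]
        exact sum_congr rfl fun b _ ↦ mulChar_inv_mul_addChar_neg_mul_sum_sq hχ ψ k b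
    _ = ∑ c, χ c * (φ (k * (c ^ 2 - 1)) * gaussSum φ ψ +
          if c ^ 2 = 1 then (Fintype.card F : R) else 0) := by
        rw [sum_comm]
        simp_rw [← mul_sum, sum_addChar_mul_sq hF hψ, hvanish]
    _ = _ := by
        simp_rw [mul_add, mul_ite, mul_zero]
        rw [sum_add_distrib, sum_ite_sq_eq_one hF, MulChar.map_one, mul_sum, add_comm]
        congr 1
        · ring
        · refine sum_congr rfl fun c _ ↦ ?_
          rw [map_mul]
          ring

end QuadraticSums

namespace ZMod

variable {N : ℕ} [NeZero N]

theorem sum_range_eq_sum_val {M : Type*} [AddCommMonoid M] (f : ℕ → M) :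
    ∑ i ∈ range N, f i = ∑ x : ZMod N, f x.val :=
  sum_nbij' (↑) val (fun _ _ ↦ mem_univ _) (fun x _ ↦ mem_range.2 x.val_lt)
    (fun _ hi ↦ val_cast_of_lt (mem_range.1 hi)) (fun x _ ↦ natCast_zmod_val x)
    (fun _ hi ↦ by rw [val_cast_of_lt (mem_range.1 hi)])

theorem sum_Icc_two_sub_two_eq_sum {M : Type*} [AddCommMonoid M] {g : ZMod N → M}
    (h0 : g 0 = 0) (h1 : g 1 = 0) (hneg1 : g (-1) = 0) :
    ∑ a ∈ Icc 2 (N - 2), g a = ∑ x, g x := by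
  have hvanish (a : ℕ) (ha : a ∈ range N) (ha' : a ∉ Icc 2 (N - 2)) : g a = 0 := by
    rw [mem_range] at ha
    rw [mem_Icc] at ha'
    obtain rfl | rfl | rfl : a = 0 ∨ a = 1 ∨ a = N - 1 := by omega
    · rwa [Nat.cast_zero]
    · rwa [Nat.cast_one]
    · rwa [Nat.cast_sub (by omega), natCast_self, Nat.cast_one, zero_sub]
  rw [sum_subset (fun a ha ↦ by simp only [mem_Icc, mem_range] at ha ⊢; omega) hvanish,
    sum_range_eq_sum_val]
  simp_rw [natCast_zmod_val]

theorem stdAddChar_intCast_mul_sq (k : ℤ) (a : ZMod N) :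
    stdAddChar ((k : ZMod N) * a ^ 2) = exp (2 * Real.pi * I * k * (a.val : ℂ) ^ 2 / N) := by
  have hcast : ((k * (a.val : ℤ) ^ 2 : ℤ) : ZMod N) = k * a ^ 2 := by
    push_cast [natCast_zmod_val]
    ring
  rw [← hcast, stdAddChar_coe]
  push_cast
  ring_nf

end ZMod

theorem gauss_sum_sq_abs (p : ℕ) [Fact p.Prime] (hp2 : p ≠ 2)
    (n : ℤ) (hn : Int.gcd n p = 1)
    (χ : DirichletCharacter ℂ p) (hχ : χ ≠ 1) :
    (‖∑ a : ZMod p, χ a *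
        Complex.exp (2 * Real.pi * I * n * (a.val : ℂ) ^ 2 / p)‖ : ℂ) ^ 2
      = (1 + χ (-1)) * p +
        (legendreSym p n : ℂ) *
          (∑ b ∈ Finset.range p, Complex.exp (2 * Real.pi * I * (b : ℂ) ^ 2 / p)) *
          ∑ a ∈ Finset.Icc 2 (p - 2), χ (a : ZMod p) * (legendreSym p ((a : ℤ) ^ 2 - 1) : ℂ) := by
  have hF : ringChar (ZMod p) ≠ 2 := by rwa [ZMod.ringChar_zmod_n]
  have hn0 : (n : ZMod p) ≠ 0 := fun h ↦ (Fact.out : p.Prime).not_dvd_one <| by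
    simpa [hn] using Int.dvd_gcd ((ZMod.intCast_zmod_eq_zero_iff_dvd n p).1 h) dvd_rfl
  have hψ := ZMod.isPrimitive_stdAddChar p
  let φ := (quadraticChar (ZMod p)).ringHomComp (algebraMap ℤ ℂ)
  set G := ∑ a : ZMod p, χ a * ZMod.stdAddChar ((n : ZMod p) * a ^ 2)
  have hG : ∑ a : ZMod p, χ a * exp (2 * Real.pi * I * n * (a.val : ℂ) ^ 2 / p) = G := by
    simp_rw [G, ZMod.stdAddChar_intCast_mul_sq]
  have hconj : starRingEnd ℂ G = ∑ b, χ⁻¹ b * ZMod.stdAddChar (-((n : ZMod p) * b ^ 2)) := by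
    refine (map_sum _ _ _).trans (sum_congr rfl fun b _ ↦ ?_)
    rw [map_mul, AddChar.map_neg_eq_conj, ← MulChar.star_apply', starRingEnd_apply]
  have hgauss : gaussSum φ ZMod.stdAddChar =
      ∑ b ∈ range p, exp (2 * Real.pi * I * (b : ℂ) ^ 2 / p) := by
    rw [gaussSum_quadraticChar_eq_sum_sq hF hψ, ZMod.sum_range_eq_sum_val]
    exact sum_congr rfl fun x _ ↦ by
      simpa only [Int.cast_one, one_mul, mul_one] using ZMod.stdAddChar_intCast_mul_sq 1 x
  have hIcc : ∑ a ∈ Icc 2 (p - 2), χ (a : ZMod p) * (legendreSym p ((a : ℤ) ^ 2 - 1) : ℂ) =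
      ∑ c, χ c * φ (c ^ 2 - 1) := by
    rw [← ZMod.sum_Icc_two_sub_two_eq_sum (by rw [MulChar.map_zero, zero_mul])
      (by rw [one_pow, sub_self, MulChar.map_zero, mul_zero])
      (by rw [neg_one_sq, sub_self, MulChar.map_zero, mul_zero])]
    refine sum_congr rfl fun a _ ↦ ?_
    simp [φ, legendreSym, MulChar.ringHomComp_apply]
  have hleg : φ n = legendreSym p n := rfl
  rw [hG, ← Complex.mul_conj', hconj, sum_mulChar_mul_addChar_sq_mul_sum_inv hF hχ hψ hn0,
    hgauss, hIcc, ZMod.card, hleg]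
end

section
/- Let p be an odd prime and χ a non-principal Dirichlet character modulo p. Then for any integer t with gcd(t,p)=1, |∑_{a=1}^{p-1} χ(t·a + a⁻¹)| = |∑_{a=1}^{p-1} χ(a)·((a²-t)/p)|, where a⁻¹ denotes the multiplicative inverse of a modulo p and (·/p) is the Legendre symbol. -/
/-!
After `u ↦ u⁻¹` and pulling out `χ 2`, the sum becomes `∑ χ(m u)` with `m u = (u + t/u)/2`.
Since `m u = a` iff `(u - a)² = a² - t`, and `t ≠ 0` keeps `u = 0` out of that equation, the fibre
of `m` over `a` has `1 + ((a² - t)/p)` elements. The constant `1` contributes `∑ₐ χ(a) = 0`, and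
`|χ 2| = 1`.
-/

open Finset

theorem MulChar.sum_units_mul {M R : Type*} [CommMonoidWithZero M] [Fintype M] [Fintype Mˣ]
    [CommSemiring R] (χ : MulChar M R) (f : M → R) :
    ∑ u : Mˣ, χ u * f u = ∑ a, χ a * f a :=
  Fintype.sum_of_injective _ Units.val_injective _ _
    (fun _ ha ↦ by rw [χ.map_nonunit fun hu ↦ ha ⟨hu.unit, rfl⟩, zero_mul]) fun _ ↦ rfl

theorem ZMod.intCast_ne_zero_of_gcd_eq_one {n : ℕ} (hn : n ≠ 1) {t : ℤ} (ht : Int.gcd t n = 1) :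
    (t : ZMod n) ≠ 0 := by
  rw [Ne, ZMod.intCast_zmod_eq_zero_iff_dvd]
  intro h
  have := Int.gcd_eq_right (Int.natCast_nonneg n) h
  omega

section FiniteField

variable {F : Type*} [Field F] {t : F}

theorem inv_two_mul_add_mul_inv_eq_iff (h2 : (2 : F) ≠ 0) {u : F} (hu : u ≠ 0) (a : F) :
    2⁻¹ * (u + t * u⁻¹) = a ↔ (u - a) ^ 2 = a ^ 2 - t := by
  field_simp
  constructor <;> intro h <;> linear_combination h

variable [Fintype F] [DecidableEq F]

theorem card_units_sub_sq_eq (ht : t ≠ 0) (a : F) :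
    #{u : Fˣ | ((u : F) - a) ^ 2 = a ^ 2 - t} = #{x : F | x ^ 2 = a ^ 2 - t} := by
  refine card_nbij (fun u ↦ (u : F) - a) (fun u hu ↦ by simpa using hu)
    (fun u _ v _ h ↦ Units.ext (sub_left_injective h)) fun x hx ↦ ?_
  have hx : x ^ 2 = a ^ 2 - t := by simpa using hx
  have hax : a + x ≠ 0 := fun h ↦ ht (by linear_combination hx + (a - x) * h)
  exact ⟨Units.mk0 (a + x) hax, by simpa using hx, by simp⟩

theorem card_units_inv_two_mul_add_mul_inv_eq (hF : ringChar F ≠ 2) (ht : t ≠ 0) (a : F) :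
    (#{u : Fˣ | 2⁻¹ * ((u : F) + t * (u : F)⁻¹) = a} : ℤ) = quadraticChar F (a ^ 2 - t) + 1 := by
  rw [← quadraticChar_card_sqrts hF, Set.toFinset_ofPred, ← card_units_sub_sq_eq ht]
  simp only [inv_two_mul_add_mul_inv_eq_iff (Ring.two_ne_zero hF) (Units.ne_zero _)]

theorem sum_mulChar_mul_add_inv_eq {R : Type*} [CommRing R] [IsDomain R] {χ : MulChar F R}
    (hχ : χ ≠ 1) (hF : ringChar F ≠ 2) (ht : t ≠ 0) :
    ∑ u : Fˣ, χ (t * u + (u⁻¹ : Fˣ)) = χ 2 * ∑ a, χ a * quadraticChar F (a ^ 2 - t) := by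
  have h2 := Ring.two_ne_zero hF
  calc ∑ u : Fˣ, χ (t * u + (u⁻¹ : Fˣ))
      = ∑ u : Fˣ, χ (2 * (2⁻¹ * ((u : F) + t * (u : F)⁻¹))) := by
        refine Fintype.sum_equiv (Equiv.inv Fˣ) _ _ fun u ↦ ?_
        simp [mul_inv_cancel_left₀ h2, add_comm]
    _ = ∑ a, (#{u : Fˣ | 2⁻¹ * ((u : F) + t * (u : F)⁻¹) = a} : R) * (χ 2 * χ a) := by
        rw [← sum_fiberwise' univ _ fun a ↦ χ (2 * a)]
        simp [map_mul]
    _ = χ 2 * ∑ a, χ a * quadraticChar F (a ^ 2 - t) + χ 2 * ∑ a, χ a := by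
        rw [mul_sum, mul_sum, ← sum_add_distrib]
        refine sum_congr rfl fun a _ ↦ ?_
        rw [← Int.cast_natCast, card_units_inv_two_mul_add_mul_inv_eq hF ht]
        push_cast
        ring
    _ = χ 2 * ∑ a, χ a * quadraticChar F (a ^ 2 - t) := by
        rw [MulChar.sum_eq_zero_of_ne_one hχ, mul_zero, add_zero]

end FiniteField

theorem abs_char_sum_eq (p : ℕ) [Fact p.Prime] (hp2 : p ≠ 2)
    (χ : DirichletCharacter ℂ p) (hχ : χ ≠ 1)
    (t : ℤ) (ht : Int.gcd t p = 1) :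
    ‖(∑ a : (ZMod p)ˣ, χ ((t : ZMod p) * (a : ZMod p) + ((a⁻¹ : (ZMod p)ˣ) : ZMod p)))‖
      = ‖(∑ a : (ZMod p)ˣ, χ (a : ZMod p) *
          (legendreSym p (((a : ZMod p).val : ℤ) ^ 2 - t) : ℂ))‖ := by
  have hF : ringChar (ZMod p) ≠ 2 := by rwa [ZMod.ringChar_zmod_n]
  have ht0 : (t : ZMod p) ≠ 0 := ZMod.intCast_ne_zero_of_gcd_eq_one (Fact.out : p.Prime).ne_one ht
  have hχ2 : ‖χ 2‖ = 1 := by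
    simpa using χ.unit_norm_eq_one (isUnit_iff_ne_zero.mpr (Ring.two_ne_zero hF)).unit
  have hlegendre (a : ZMod p) :
      legendreSym p ((a.val : ℤ) ^ 2 - t) = quadraticChar (ZMod p) (a ^ 2 - t) := by
    simp [legendreSym]
  simp only [hlegendre]
  rw [MulChar.sum_units_mul χ fun a ↦ (quadraticChar (ZMod p) (a ^ 2 - t) : ℂ),
    sum_mulChar_mul_add_inv_eq hχ hF ht0, norm_mul, hχ2, one_mul]
end
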